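/- arXiv:2503.02934 — 7 statements merged into one kernel-verified Lean document; each statement's English description precedes it below -/
import Mathlib

section
/- For a parameterised IQP circuit U(θ) = ∏_j exp(iθ_j X_{g_j}) on n qubits with input |0⟩, the expectation value ⟨0|U(θ)† Z_a U(θ)|0⟩ equals the expectation over z drawn uniformly from {0,1}^n of cos(∑_j θ_j (-1)^{g_j·z} (1 - (-1)^{g_j·a})). -/
open Finset Matrix

noncomputable section

abbrev Bits (n : ℕ) := Fin n → Bool

def bdot {n : ℕ} (a z : Bits n) : ℕ := (Finset.univ.filter fun i => a i ∧ z i).card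

def wt {n : ℕ} (a : Bits n) : ℕ := (Finset.univ.filter fun i => a i).card

def Zword {n : ℕ} (a : Bits n) : Matrix (Bits n) (Bits n) ℂ :=
  Matrix.diagonal fun z => (-1 : ℂ) ^ bdot a z

def Xword {n : ℕ} (g : Bits n) : Matrix (Bits n) (Bits n) ℂ :=
  Matrix.of fun x y => if (fun i => xor (y i) (g i)) = x then 1 else 0

def gateX {n : ℕ} (θ : ℝ) (g : Bits n) : Matrix (Bits n) (Bits n) ℂ :=
  NormedSpace.exp ((Complex.I * (θ : ℂ)) • Xword g)

def gateZ {n : ℕ} (θ : ℝ) (g : Bits n) : Matrix (Bits n) (Bits n) ℂ :=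
  NormedSpace.exp ((Complex.I * (θ : ℂ)) • Zword g)

def Ucirc {n m : ℕ} (θ : Fin m → ℝ) (g : Fin m → Bits n) : Matrix (Bits n) (Bits n) ℂ :=
  (List.ofFn fun j => gateX (θ j) (g j)).prod

def zeroBits (n : ℕ) : Bits n := fun _ => false

/-!
Let `H` be the `2ⁿ × 2ⁿ` Hadamard matrix with entries `(-1)^{x·y}`. Character orthogonality gives
`H² = 2ⁿ`, and `H X_g = D_g H` where `D_g` is diagonal with entries `(-1)^{g·z}`. Hence every gate
`exp(iθ X_g)` is turned by `H` into the diagonal phase `exp(iθ (-1)^{g·z})`, and the whole circuit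
is `U = 2⁻ⁿ H e^{iφ} H` with `φ(z) = ∑ⱼ θⱼ (-1)^{gⱼ·z}`. As `H Z_a H = 2ⁿ X_a` and row `0` of `H`
is all ones, `⟨0|U† Z_a U|0⟩ = 2⁻ⁿ ∑ₓ e^{i(φ(x+a) - φ(x))}`. The involution `x ↦ x + a` negates
the exponent, so the imaginary parts cancel and only the cosines remain.
-/

/-- Matrices carry no global norm; the operator norm is opened only to apply
`SemiconjBy.exp_right`. -/
theorem Matrix.semiconjBy_exp {m 𝕜 : Type*} [Fintype m] [DecidableEq m] [RCLike 𝕜]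
    {x a b : Matrix m m 𝕜} (h : SemiconjBy x a b) :
    SemiconjBy x (NormedSpace.exp a) (NormedSpace.exp b) := by
  open scoped Norms.Operator in exact h.exp_right

theorem SemiconjBy.list_prod_ofFn {M : Type*} [Monoid M] {m : ℕ} {a : M} {x y : Fin m → M}
    (h : ∀ j, SemiconjBy a (x j) (y j)) :
    SemiconjBy a (List.ofFn x).prod (List.ofFn y).prod := by
  induction m with
  | zero => exact SemiconjBy.one_right a
  | succ m ih =>
    simp only [List.ofFn_succ, List.prod_cons]
    exact (h 0).mul_right (ih fun j => h j.succ)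

theorem Matrix.list_prod_ofFn_diagonal {ι α : Type*} [Fintype ι] [DecidableEq ι] [CommSemiring α]
    {m : ℕ} (d : Fin m → ι → α) :
    (List.ofFn fun j => diagonal (d j)).prod = diagonal fun z => ∏ j, d j z := by
  rw [← Finset.prod_fn, ← List.prod_ofFn]
  have h := map_list_prod (diagonalRingHom ι α) (List.ofFn d)
  rw [List.map_ofFn] at h
  exact h.symm

theorem Complex.star_exp_mul_I_mul_exp_mul_I (s t : ℝ) :
    star (exp (s * I)) * exp (t * I) = exp ((t - s : ℝ) * I) := by
  rw [star_def, ← exp_conj, map_mul, conj_ofReal, conj_I, ← exp_add]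
  push_cast
  ring_nf

theorem sum_exp_mul_I_eq_sum_cos {α : Type*} [Fintype α] (σ : Equiv.Perm α) (f : α → ℝ)
    (hf : ∀ x, f (σ x) = -f x) :
    ∑ x, Complex.exp (f x * Complex.I) = ∑ x, (Real.cos (f x) : ℂ) := by
  have h_sin : ∑ x, Real.sin (f x) = 0 := by
    have h_perm := Equiv.sum_comp σ fun x => Real.sin (f x)
    simp only [hf, Real.sin_neg, sum_neg_distrib] at h_perm
    linarith
  have h_sin' : ∑ x, Complex.sin (f x) = 0 := by exact_mod_cast h_sin
  simp only [Complex.exp_mul_I, sum_add_distrib, ← sum_mul, h_sin', zero_mul, add_zero,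
    Complex.ofReal_cos]

namespace IQP

variable {n : ℕ}

/-- `Bits n` is a ring through Mathlib's `BooleanRing Bool`: `+` is `xor` and `*` is `and`. -/
theorem zeroBits_eq_zero : zeroBits n = 0 := rfl

theorem bits_add_self (a : Bits n) : a + a = 0 :=
  funext fun i => Bool.xor_self (a i)

theorem bits_add_eq_iff (x y a : Bits n) : x + a = y ↔ x = y + a := by
  constructor <;> rintro rfl <;> rw [add_assoc, bits_add_self, add_zero]

def signChar : AddChar Bool ℝ where
  toFun b := if b then -1 else 1
  map_zero_eq_one' := rfl
  map_add_eq_mul' a b := by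
    change (if xor a b then _ else _) = _
    cases a <;> cases b <;> norm_num

def chi (a : Bits n) : AddChar (Bits n) ℝ where
  toFun z := ∏ i, signChar (a i * z i)
  map_zero_eq_one' := by simp
  map_add_eq_mul' x y := by
    simp only [Pi.add_apply, mul_add, AddChar.map_add_eq_mul, prod_mul_distrib]

theorem neg_one_pow_bdot (a z : Bits n) : (-1 : ℝ) ^ bdot a z = chi a z := by
  rw [bdot, ← prod_const, prod_filter]
  refine prod_congr rfl fun i _ => ?_
  cases a i <;> cases z i <;> rfl

theorem chi_apply_comm (a z : Bits n) : chi a z = chi z a := by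
  simp only [chi, AddChar.coe_mk, mul_comm]

theorem chi_add_left (a b z : Bits n) : chi (a + b) z = chi a z * chi b z := by
  rw [chi_apply_comm, AddChar.map_add_eq_mul, chi_apply_comm z, chi_apply_comm z]

theorem chi_zero_left (z : Bits n) : chi 0 z = 1 := by
  rw [chi_apply_comm, AddChar.map_zero_eq_one]

theorem chi_eq_zero_iff (a : Bits n) : chi a = 0 ↔ a = 0 := by
  refine ⟨fun h => funext fun i => ?_, by rintro rfl; ext z; exact chi_zero_left z⟩
  have h_single : chi a (Pi.single i 1 : Bits n) = signChar (a i) := by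
    refine (prod_eq_single i (fun j _ hj => ?_) fun h => absurd (mem_univ i) h).trans ?_
    · rw [Pi.single_eq_of_ne hj, mul_zero, AddChar.map_zero_eq_one]
    · rw [Pi.single_eq_same, mul_one]
  have h_one := DFunLike.congr_fun h (Pi.single i 1 : Bits n)
  rw [h_single, AddChar.zero_apply] at h_one
  cases h_ai : a i
  · rfl
  · norm_num [h_ai, signChar] at h_one

theorem sum_chi (c : Bits n) : ∑ z, chi c z = if c = 0 then (2 : ℝ) ^ n else 0 := by
  classical
  simp [AddChar.sum_eq_ite, chi_eq_zero_iff]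

def hadamard (n : ℕ) : Matrix (Bits n) (Bits n) ℂ :=
  of fun x y => (chi x y : ℂ)

theorem hadamard_apply (x y : Bits n) : hadamard n x y = chi x y := rfl

theorem hadamard_conjTranspose : (hadamard n)ᴴ = hadamard n := by
  ext x y
  simp [hadamard_apply, chi_apply_comm x y]

theorem hadamard_mul_self : hadamard n * hadamard n = (2 ^ n : ℂ) • 1 := by
  ext x y
  have h_orth : ∑ w, chi x w * chi w y = if x = y then (2 : ℝ) ^ n else 0 := by
    simp only [chi_apply_comm _ y, ← chi_add_left, sum_chi, bits_add_eq_iff, zero_add]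
  simp only [mul_apply, hadamard_apply, ← Complex.ofReal_mul, ← Complex.ofReal_sum, h_orth,
    Matrix.smul_apply, one_apply, smul_eq_mul]
  split_ifs <;> simp

theorem hadamard_mul_mul_hadamard_apply_zero (M : Matrix (Bits n) (Bits n) ℂ) :
    (hadamard n * M * hadamard n) 0 0 = ∑ x, ∑ y, M x y := by
  simp only [mul_apply, hadamard_apply, chi_zero_left, chi_apply_comm _ 0, Complex.ofReal_one,
    one_mul, mul_one]
  exact sum_comm

theorem Xword_apply (g x y : Bits n) : Xword g x y = if y + g = x then 1 else 0 := rfl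

theorem mul_Xword_apply (g x y : Bits n) (P : Matrix (Bits n) (Bits n) ℂ) :
    (P * Xword g) x y = P x (y + g) := by
  simp [mul_apply, Xword_apply]

theorem sum_diagonal_mul_Xword_mul_diagonal_apply (e d : Bits n → ℂ) (a : Bits n) :
    ∑ x, ∑ y, (diagonal e * Xword a * diagonal d) x y = ∑ x, e x * d (x + a) := by
  simp [mul_diagonal, diagonal_mul, Xword_apply, bits_add_eq_iff]

theorem Zword_eq_diagonal (a : Bits n) : Zword a = diagonal fun z => (chi a z : ℂ) := by
  simp only [Zword, ← neg_one_pow_bdot]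
  push_cast
  rfl

theorem semiconjBy_hadamard_Xword (g : Bits n) :
    SemiconjBy (hadamard n) (Xword g) (diagonal fun z => (chi g z : ℂ)) := by
  ext x y
  rw [mul_Xword_apply, diagonal_mul, hadamard_apply, hadamard_apply, AddChar.map_add_eq_mul,
    chi_apply_comm x g]
  push_cast
  ring

theorem hadamard_mul_Zword_mul_hadamard (a : Bits n) :
    hadamard n * Zword a * hadamard n = (2 ^ n : ℂ) • Xword a := by
  rw [Zword_eq_diagonal, mul_assoc, ← (semiconjBy_hadamard_Xword a).eq, ← mul_assoc,
    hadamard_mul_self, smul_mul, one_mul]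

theorem semiconjBy_hadamard_gateX (θ : ℝ) (g : Bits n) :
    SemiconjBy (hadamard n) (gateX θ g)
      (diagonal fun z => Complex.exp (θ * chi g z * Complex.I)) := by
  have h_exp : NormedSpace.exp ((Complex.I * θ) • diagonal fun z => (chi g z : ℂ))
      = diagonal fun z => Complex.exp (θ * chi g z * Complex.I) := by
    rw [← diagonal_smul, exp_diagonal, Pi.exp_def]
    congr
    ext z
    rw [← Complex.exp_eq_exp_ℂ, Pi.smul_apply, smul_eq_mul]
    ring_nf
  rw [gateX, ← h_exp]
  exact Matrix.semiconjBy_exp ((semiconjBy_hadamard_Xword g).smul_right _)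

def phase {m : ℕ} (θ : Fin m → ℝ) (g : Fin m → Bits n) (z : Bits n) : ℝ :=
  ∑ j, θ j * chi (g j) z

theorem semiconjBy_hadamard_Ucirc {m : ℕ} (θ : Fin m → ℝ) (g : Fin m → Bits n) :
    SemiconjBy (hadamard n) (Ucirc θ g)
      (diagonal fun z => Complex.exp (phase θ g z * Complex.I)) := by
  have h := SemiconjBy.list_prod_ofFn fun j => semiconjBy_hadamard_gateX (θ j) (g j)
  have h_prod : (fun z => ∏ j, Complex.exp (θ j * chi (g j) z * Complex.I))
      = fun z => Complex.exp (phase θ g z * Complex.I) := by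
    ext z
    rw [← Complex.exp_sum, phase, ← sum_mul]
    push_cast
    rfl
  rwa [Matrix.list_prod_ofFn_diagonal, h_prod] at h

/-- `H * diagonal d * H⁻¹`, since `H⁻¹ = 2⁻ⁿ • H`. -/
def hadamardDiagonal (d : Bits n → ℂ) : Matrix (Bits n) (Bits n) ℂ :=
  (2 ^ n : ℂ)⁻¹ • (hadamard n * diagonal d * hadamard n)

theorem Ucirc_eq_hadamardDiagonal {m : ℕ} (θ : Fin m → ℝ) (g : Fin m → Bits n) :
    Ucirc θ g = hadamardDiagonal fun z => Complex.exp (phase θ g z * Complex.I) := by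
  rw [hadamardDiagonal, mul_assoc, ← (semiconjBy_hadamard_Ucirc θ g).eq, ← mul_assoc,
    hadamard_mul_self, smul_mul, one_mul, inv_smul_smul₀ (by simp)]

theorem hadamardDiagonal_conjTranspose (d : Bits n → ℂ) :
    (hadamardDiagonal d)ᴴ = hadamardDiagonal (star d) := by
  simp [hadamardDiagonal, conjTranspose_mul, hadamard_conjTranspose, mul_assoc]

theorem conjTranspose_hadamardDiagonal_mul_Zword_mul (d : Bits n → ℂ) (a : Bits n) :
    (hadamardDiagonal d)ᴴ * Zword a * hadamardDiagonal d
      = (2 ^ n : ℂ)⁻¹ • (hadamard n * (diagonal (star d) * Xword a * diagonal d) * hadamard n) := by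
  have h_scalar : (2 ^ n : ℂ)⁻¹ * ((2 ^ n)⁻¹ * 2 ^ n) = (2 ^ n)⁻¹ := by field_simp
  calc _ = ((2 ^ n : ℂ)⁻¹ * (2 ^ n)⁻¹) • (hadamard n * diagonal (star d)
          * (hadamard n * Zword a * hadamard n) * diagonal d * hadamard n) := by
        rw [hadamardDiagonal_conjTranspose, hadamardDiagonal, hadamardDiagonal]
        simp only [Matrix.smul_mul, Matrix.mul_smul, smul_smul, mul_assoc]
    _ = _ := by
        rw [hadamard_mul_Zword_mul_hadamard]
        simp only [Matrix.smul_mul, Matrix.mul_smul, smul_smul, mul_assoc, h_scalar]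

theorem Ucirc_expval_Zword_eq_sum_cos {m : ℕ} (θ : Fin m → ℝ) (g : Fin m → Bits n) (a : Bits n) :
    ((Ucirc θ g)ᴴ * Zword a * Ucirc θ g) 0 0
      = (2 ^ n : ℂ)⁻¹ * ∑ x, (Real.cos (phase θ g (x + a) - phase θ g x) : ℂ) := by
  have h_antisymm (x : Bits n) : phase θ g (x + a + a) - phase θ g (x + a)
      = -(phase θ g (x + a) - phase θ g x) := by
    rw [add_assoc, bits_add_self, add_zero]
    ring
  rw [Ucirc_eq_hadamardDiagonal, conjTranspose_hadamardDiagonal_mul_Zword_mul, Matrix.smul_apply,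
    hadamard_mul_mul_hadamard_apply_zero, sum_diagonal_mul_Xword_mul_diagonal_apply]
  simp only [Pi.star_apply, Complex.star_exp_mul_I_mul_exp_mul_I, smul_eq_mul]
  rw [sum_exp_mul_I_eq_sum_cos (Equiv.addRight a) _ h_antisymm]

end IQP

open IQP

/-- for a parameterised IQP circuit with input |0⟩, the expectation
⟨0|U(θ)† Z_a U(θ)|0⟩ equals the uniform average over z ∈ {0,1}ⁿ of
cos(∑ⱼ θⱼ (-1)^{gⱼ·z} (1 - (-1)^{gⱼ·a})). -/
theorem iqp_expval_eq_uniform_average {n m : ℕ} (θ : Fin m → ℝ) (g : Fin m → Bits n)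
    (a : Bits n) :
    ((Ucirc θ g)ᴴ * Zword a * Ucirc θ g) (zeroBits n) (zeroBits n)
      = (((1 / 2 ^ n : ℝ) * ∑ z : Bits n,
          Real.cos (∑ j, θ j * (-1 : ℝ) ^ bdot (g j) z *
            (1 - (-1 : ℝ) ^ bdot (g j) a)) : ℝ) : ℂ) := by
  have h_cos_arg (z : Bits n) :
      ∑ j, θ j * (-1 : ℝ) ^ bdot (g j) z * (1 - (-1 : ℝ) ^ bdot (g j) a)
        = -(phase θ g (z + a) - phase θ g z) := by
    simp only [phase, neg_one_pow_bdot, AddChar.map_add_eq_mul, ← sum_sub_distrib,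
      ← sum_neg_distrib]
    exact sum_congr rfl fun j _ => by ring
  rw [zeroBits_eq_zero, Ucirc_expval_Zword_eq_sum_cos]
  simp only [h_cos_arg, Real.cos_neg]
  push_cast
  ring
end
end

section
/- The squared maximum mean discrepancy between probability distributions p and q over {0,1}^n, defined with the Gaussian kernel k(x,y) = exp(-||x-y||²/(2σ²)), equals E_{a∼P_σ}[(⟨Z_a⟩_p - ⟨Z_a⟩_q)²], where P_σ(a) = (1-p_σ)^{n-|a|} p_σ^{|a|} with p_σ = (1 - e^{-1/(2σ²)})/2, |a| the Hamming weight of a, and ⟨Z_a⟩_p = E_{x∼p}[(-1)^{x·a}]. -/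
open Finset Matrix

noncomputable section

/-!
Write `t = exp (-1 / (2σ²))`, so that the Gaussian kernel is `k x y = t ^ d(x, y)` with `d` the
Hamming distance. Both `t ^ d(x, y)` and the weighted character sum
`∑ₐ P_σ(a) (-1)^{x·a} (-1)^{y·a}` factor over the coordinates, and on one coordinate the
character sum is `1` if `xᵢ = yᵢ` and `(1 - p_σ) - p_σ = t` otherwise. Hence
`k x y = ∑ₐ P_σ(a) (-1)^{x·a} (-1)^{y·a}`, and substituting this feature expansion into the
three terms of the MMD turns them into `∑ₐ P_σ(a) (⟨Z_a⟩_p - ⟨Z_a⟩_q)²`.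
-/

section FeatureExpansion

variable {X A R : Type*} [Fintype X] [Fintype A] [CommRing R]

theorem sum_sum_mul_mul_eq_sum_mul_features {k : X → X → R} {w : A → R} {φ : A → X → R}
    (hk : ∀ x y, k x y = ∑ a, w a * (φ a x * φ a y)) (r s : X → R) :
    ∑ x, ∑ y, r x * s y * k x y = ∑ a, w a * ((∑ x, r x * φ a x) * ∑ y, s y * φ a y) := by
  simp_rw [sum_mul_sum, hk, mul_sum]
  conv_rhs => rw [sum_comm]; enter [2, x]; rw [sum_comm]
  exact sum_congr rfl fun x _ => sum_congr rfl fun y _ => sum_congr rfl fun a _ => by ring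

theorem mmd_sq_eq_sum_mul_sq_of_features {k : X → X → R} {w : A → R} {φ : A → X → R}
    (hk : ∀ x y, k x y = ∑ a, w a * (φ a x * φ a y)) (p q : X → R) :
    (∑ x, ∑ y, p x * p y * k x y) - 2 * (∑ x, ∑ y, p x * q y * k x y)
        + (∑ x, ∑ y, q x * q y * k x y)
      = ∑ a, w a * ((∑ x, p x * φ a x) - ∑ x, q x * φ a x) ^ 2 := by
  rw [sum_sum_mul_mul_eq_sum_mul_features hk, sum_sum_mul_mul_eq_sum_mul_features hk,
    sum_sum_mul_mul_eq_sum_mul_features hk, mul_sum, ← sum_sub_distrib, ← sum_add_distrib]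
  exact sum_congr rfl fun a _ => by ring

end FeatureExpansion

theorem pow_card_filter_eq_prod {ι M : Type*} [Fintype ι] [CommMonoid M] (P : ι → Prop)
    [DecidablePred P] (c : M) :
    c ^ #{i | P i} = ∏ i, if P i then c else 1 := by
  rw [← prod_const, prod_filter]

namespace Bits

variable {n : ℕ}

theorem prod_ite_eq_pow_mul_pow {M : Type*} [CommMonoid M] (a : Bits n) (u v : M) :
    ∏ i, (if a i then v else u) = u ^ (n - wt a) * v ^ wt a := by
  have hcard : #{i | a i = false} = n - wt a := by
    have := card_filter_add_card_filter_not (s := (univ : Finset (Fin n))) (fun i => a i = true)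
    simp only [card_univ, Fintype.card_fin, Bool.not_eq_true] at this
    unfold wt
    omega
  rw [prod_ite, prod_const, prod_const, mul_comm]
  simp only [Bool.not_eq_true, hcard]
  rfl

theorem neg_one_pow_bdot {R : Type*} [CommRing R] (a x : Bits n) :
    (-1 : R) ^ bdot a x = ∏ i, if a i ∧ x i then -1 else 1 :=
  pow_card_filter_eq_prod _ _

theorem pow_hammingDist {M : Type*} [CommMonoid M] (t : M) (x y : Bits n) :
    t ^ hammingDist x y = ∏ i, if x i ≠ y i then t else 1 :=
  pow_card_filter_eq_prod _ _

theorem sum_bool_weight_mul_char_mul_char {R : Type*} [CommRing R] (s : R) (u v : Bool) :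
    ∑ b : Bool, (if b then s else 1 - s) *
        ((if b ∧ u then -1 else 1) * (if b ∧ v then -1 else 1))
      = if u ≠ v then 1 - 2 * s else 1 := by
  cases u <;> cases v <;> simp <;> ring

theorem sum_weight_mul_char_mul_char_eq_pow_hammingDist {R : Type*} [CommRing R] (s : R)
    (x y : Bits n) :
    ∑ a : Bits n, (1 - s) ^ (n - wt a) * s ^ wt a * ((-1 : R) ^ bdot a x * (-1 : R) ^ bdot a y)
      = (1 - 2 * s) ^ hammingDist x y := by
  let f : Fin n → Bool → R := fun i b =>
    (if b then s else 1 - s) * ((if b ∧ x i then -1 else 1) * (if b ∧ y i then -1 else 1))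
  calc _ = ∑ a : Bits n, ∏ i, f i (a i) := by
        refine sum_congr rfl fun a _ => ?_
        simp only [f, prod_mul_distrib, prod_ite_eq_pow_mul_pow, neg_one_pow_bdot]
    _ = ∏ i, ∑ b, f i b := (Fintype.prod_sum f).symm
    _ = _ := by simp only [f, sum_bool_weight_mul_char_mul_char, pow_hammingDist]

end Bits

theorem mmd_sq_eq_pauli_mixture_general {n : ℕ} (σ : ℝ) (p q : Bits n → ℝ) :
    let k : Bits n → Bits n → ℝ := fun x y =>
      Real.exp (-(hammingDist x y : ℝ) / (2 * σ ^ 2))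
    let pσ : ℝ := (1 - Real.exp (-(1 / (2 * σ ^ 2)))) / 2
    let Pσ : Bits n → ℝ := fun a => (1 - pσ) ^ (n - wt a) * pσ ^ (wt a)
    let ZP : (Bits n → ℝ) → Bits n → ℝ := fun r a => ∑ x, r x * (-1 : ℝ) ^ bdot a x
    (∑ x, ∑ y, p x * p y * k x y) - 2 * (∑ x, ∑ y, p x * q y * k x y)
        + (∑ x, ∑ y, q x * q y * k x y)
      = ∑ a : Bits n, Pσ a * (ZP p a - ZP q a) ^ 2 := by
  intro k pσ Pσ ZP
  have hk : ∀ x y, k x y = ∑ a, Pσ a * ((-1 : ℝ) ^ bdot a x * (-1 : ℝ) ^ bdot a y) := by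
    intro x y
    have ht : 1 - 2 * pσ = Real.exp (-(1 / (2 * σ ^ 2))) := by ring
    rw [Bits.sum_weight_mul_char_mul_char_eq_pow_hammingDist, ht, ← Real.exp_nat_mul]
    exact congrArg Real.exp (by ring)
  exact mmd_sq_eq_sum_mul_sq_of_features hk p q

/-- the squared MMD with Gaussian kernel between distributions p, q on
{0,1}ⁿ equals E_{a∼P_σ}[(⟨Z_a⟩_p - ⟨Z_a⟩_q)²]. -/
theorem mmd_sq_eq_pauli_mixture {n : ℕ} (σ : ℝ) (hσ : 0 < σ) (p q : Bits n → ℝ)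
    (hp0 : ∀ x, 0 ≤ p x) (hp1 : ∑ x, p x = 1)
    (hq0 : ∀ x, 0 ≤ q x) (hq1 : ∑ x, q x = 1) :
    let k : Bits n → Bits n → ℝ := fun x y =>
      Real.exp (-(hammingDist x y : ℝ) / (2 * σ ^ 2))
    let pσ : ℝ := (1 - Real.exp (-(1 / (2 * σ ^ 2)))) / 2
    let Pσ : Bits n → ℝ := fun a => (1 - pσ) ^ (n - wt a) * pσ ^ (wt a)
    let ZP : (Bits n → ℝ) → Bits n → ℝ := fun r a => ∑ x, r x * (-1 : ℝ) ^ bdot a x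
    (∑ x, ∑ y, p x * p y * k x y) - 2 * (∑ x, ∑ y, p x * q y * k x y)
        + (∑ x, ∑ y, q x * q y * k x y)
      = ∑ a : Bits n, Pσ a * (ZP p a - ZP q a) ^ 2 :=
  mmd_sq_eq_pauli_mixture_general σ p q
end
end

section
/- For x, t ∈ {0,1}^n and σ > 0, the Gaussian kernel admits the Fourier-type expansion k(x,t) = exp(-||x-t||²/(2σ²)) = ∑_{a∈{0,1}^n} (1-p_σ)^{n-|a|} p_σ^{|a|} (-1)^{a·t} (-1)^{a·x}, where p_σ = (1 - e^{-1/(2σ²)})/2. -/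
open Finset Matrix

noncomputable section

/-! Both sides factor over the coordinates. Summing the product of the coordinate weights
`1 - p` (for `aᵢ = 0`) and `p (-1)^{tᵢ + xᵢ}` (for `aᵢ = 1`) over `a` gives `∏ᵢ (1 - p + p (-1)^{tᵢ + xᵢ})`,
whose factor is `1` where `xᵢ = tᵢ` and `1 - 2p` elsewhere; and `1 - 2 p_σ = exp(-1/(2σ²))`. -/

section WeightedParity

variable {R : Type*} [CommRing R] {n : ℕ}

theorem prod_ite_eq_pow_mul_pow_wt (p q : R) (a : Bits n) :
    (∏ i, if a i then p else q) = q ^ (n - wt a) * p ^ wt a := by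
  have hcard := card_filter_add_card_filter_not (s := (univ : Finset (Fin n))) (a · = true)
  rw [prod_ite, prod_const, prod_const, card_univ, Fintype.card_fin] at *
  rw [mul_comm, wt]
  congr 2
  omega

theorem neg_one_pow_bdot (a z : Bits n) :
    (-1 : R) ^ bdot a z = ∏ i, if a i && z i then -1 else 1 := by
  rw [← prod_filter, prod_const]
  simp [bdot]

theorem prod_ite_eq_pow_hammingDist (r : R) (x t : Bits n) :
    (∏ i, if x i = t i then 1 else r) = r ^ hammingDist x t := by
  rw [prod_ite, prod_const_one, one_mul, prod_const]
  rfl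

theorem sum_weighted_parity_eq_pow_hammingDist (p : R) (x t : Bits n) :
    ∑ a : Bits n, (1 - p) ^ (n - wt a) * p ^ wt a * (-1 : R) ^ bdot a t * (-1 : R) ^ bdot a x
      = (1 - 2 * p) ^ hammingDist x t := by
  simp_rw [← prod_ite_eq_pow_mul_pow_wt, neg_one_pow_bdot, ← prod_mul_distrib]
  rw [← Fintype.prod_sum fun i b => (if b then p else 1 - p) * (if b && t i then -1 else 1) *
    (if b && x i then -1 else 1), ← prod_ite_eq_pow_hammingDist]
  refine prod_congr rfl fun i _ => ?_
  cases x i <;> cases t i <;> simp <;> ring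

end WeightedParity

theorem gaussian_kernel_fourier_expansion_general {n : ℕ} (σ : ℝ) (x t : Bits n) :
    let pσ : ℝ := (1 - Real.exp (-(1 / (2 * σ ^ 2)))) / 2
    Real.exp (-(hammingDist x t : ℝ) / (2 * σ ^ 2))
      = ∑ a : Bits n, (1 - pσ) ^ (n - wt a) * pσ ^ (wt a) *
          (-1 : ℝ) ^ bdot a t * (-1 : ℝ) ^ bdot a x := by
  intro pσ
  have h_one_sub_two_p : 1 - 2 * pσ = Real.exp (-(1 / (2 * σ ^ 2))) := by ring
  rw [sum_weighted_parity_eq_pow_hammingDist, h_one_sub_two_p, ← Real.exp_nat_mul]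
  congr 1
  ring

/-- Fourier-type expansion of the Gaussian kernel on bitstrings. -/
theorem gaussian_kernel_fourier_expansion {n : ℕ} (σ : ℝ) (hσ : 0 < σ) (x t : Bits n) :
    let pσ : ℝ := (1 - Real.exp (-(1 / (2 * σ ^ 2)))) / 2
    Real.exp (-(hammingDist x t : ℝ) / (2 * σ ^ 2))
      = ∑ a : Bits n, (1 - pσ) ^ (n - wt a) * pσ ^ (wt a) *
          (-1 : ℝ) ^ bdot a t * (-1 : ℝ) ^ bdot a x :=
  gaussian_kernel_fourier_expansion_general σ x t
end
end

section
/- Every 2-qubit parameterised IQP circuit output distribution coincides with that of a classical stochastic bitflip circuit: with q_1 = cos²θ_1, q_2 = cos²θ_2, q_12 = cos²θ_12, one has p(00) = q_1 q_2 q_12 + (1-q_1)(1-q_2)(1-q_12), p(10) = q_1(1-q_2)(1-q_12) + (1-q_1)q_2 q_12, p(01) = (1-q_1)q_2(1-q_12) + q_1(1-q_2)q_12, and p(11) = (1-q_1)(1-q_2)q_12 + q_1 q_2(1-q_12), where p(x) = |⟨x|U(θ)|00⟩|². -/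
open Finset Matrix

noncomputable section

/-! Every gate is `cos θ • 1 + (i sin θ) • X_g` because `X_g² = 1`, and `X_g` flips the bits
in `g`. Expanding the three gates, the amplitude at `x` is a sum over the subsets of gates whose
flips compose to `x`. For two qubits there are exactly two such subsets, complementary to each
other, so their numbers of factors `i` differ by an odd number: one term is real and the other
imaginary. Hence the paths do not interfere and `|⟨x|U|00⟩|²` is the sum of the two products of
`cos²` and `sin²`. -/

open Complex in
theorem exp_smul_of_mul_self_eq_one {𝔸 : Type*} [NormedRing 𝔸] [NormedAlgebra ℂ 𝔸]
    [CompleteSpace 𝔸] {a : 𝔸} (ha : a * a = 1) (z : ℂ) :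
    NormedSpace.exp (z • a) = cosh z • (1 : 𝔸) + sinh z • a := by
  have ha2 : a ^ 2 = 1 := by rw [sq, ha]
  refine (NormedSpace.exp_series_hasSum_exp' (𝕂 := ℂ) _).unique (.even_add_odd ?_ ?_)
  · convert (hasSum_cosh z).smul_const (1 : 𝔸) using 2 with n
    rw [smul_pow, pow_mul a, ha2, one_pow, smul_smul, div_eq_inv_mul]
  · convert (hasSum_sinh z).smul_const a using 2 with n
    rw [smul_pow, pow_succ a, pow_mul a, ha2, one_pow, one_mul, smul_smul, div_eq_inv_mul]

theorem Xword_mulVec_apply {n : ℕ} (g : Bits n) (v : Bits n → ℂ) (x : Bits n) :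
    (Xword g *ᵥ v) x = v fun i => xor (x i) (g i) := by
  have hflip : ∀ y : Bits n, (fun i => xor (y i) (g i)) = x ↔ y = fun i => xor (x i) (g i) := by
    intro y; constructor <;> rintro rfl <;> funext i <;> simp
  simp [Matrix.mulVec, dotProduct, Xword, hflip]

theorem Xword_mul_self {n : ℕ} (g : Bits n) : Xword g * Xword g = 1 := by
  ext x y
  have h : (fun i => xor (y i) (g i)) = (fun i => xor (x i) (g i)) ↔ x = y := by
    simp [funext_iff, eq_comm]
  exact (Xword_mulVec_apply g (fun w => Xword g w y) x).trans
    (by simp [Xword, h, Matrix.one_apply])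

theorem gateX_eq_cos_add_I_sin {n : ℕ} (θ : ℝ) (g : Bits n) :
    gateX θ g = (Real.cos θ : ℂ) • (1 : Matrix (Bits n) (Bits n) ℂ)
      + (Complex.I * Real.sin θ) • Xword g := by
  let : NormedRing (Matrix (Bits n) (Bits n) ℂ) := Matrix.linftyOpNormedRing
  let : NormedAlgebra ℂ (Matrix (Bits n) (Bits n) ℂ) := Matrix.linftyOpNormedAlgebra
  have h := exp_smul_of_mul_self_eq_one (Xword_mul_self g) (θ * Complex.I)
  rw [Complex.cosh_mul_I, Complex.sinh_mul_I, mul_comm _ Complex.I, mul_comm _ Complex.I] at h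
  push_cast
  exact h

theorem gateX_mulVec_apply {n : ℕ} (θ : ℝ) (g : Bits n) (v : Bits n → ℂ) (x : Bits n) :
    (gateX θ g *ᵥ v) x =
      Real.cos θ * v x + Complex.I * Real.sin θ * v fun i => xor (x i) (g i) := by
  rw [gateX_eq_cos_add_I_sin, Matrix.add_mulVec, Matrix.smul_mulVec, Matrix.smul_mulVec,
    Matrix.one_mulVec, Pi.add_apply, Pi.smul_apply, Pi.smul_apply, Xword_mulVec_apply,
    smul_eq_mul, smul_eq_mul]

/-- a 2-qubit parameterised IQP circuit output distribution coincides
with that of a classical stochastic bitflip circuit with q₁ = cos²θ₁, q₂ = cos²θ₂,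
q₁₂ = cos²θ₁₂. -/
theorem two_qubit_iqp_is_bitflip (θ1 θ2 θ12 : ℝ) :
    let g1 : Bits 2 := ![true, false]
    let g2 : Bits 2 := ![false, true]
    let g12 : Bits 2 := ![true, true]
    let U : Matrix (Bits 2) (Bits 2) ℂ := gateX θ12 g12 * gateX θ1 g1 * gateX θ2 g2
    let p : Bits 2 → ℝ := fun x =>
      ‖(U.mulVec fun w => if w = ![false, false] then (1 : ℂ) else 0) x‖ ^ 2
    let q1 : ℝ := Real.cos θ1 ^ 2
    let q2 : ℝ := Real.cos θ2 ^ 2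
    let q12 : ℝ := Real.cos θ12 ^ 2
    p ![false, false] = q1 * q2 * q12 + (1 - q1) * (1 - q2) * (1 - q12) ∧
    p ![true, false] = q1 * (1 - q2) * (1 - q12) + (1 - q1) * q2 * q12 ∧
    p ![false, true] = (1 - q1) * q2 * (1 - q12) + q1 * (1 - q2) * q12 ∧
    p ![true, true] = (1 - q1) * (1 - q2) * q12 + q1 * q2 * (1 - q12) := by
  intro g1 g2 g12 U p q1 q2 q12
  simp only [p, U, q1, q2, q12, ← Matrix.mulVec_mulVec, gateX_mulVec_apply, ← Real.sin_sq]
  simp +decide only [g1, g2, g12, funext_iff, ite_true, ite_false, mul_one,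
    mul_zero, add_zero, zero_add]
  refine ⟨?_, ?_, ?_, ?_⟩ <;>
  · rw [Complex.sq_norm, Complex.normSq_apply]
    simp only [Complex.add_re, Complex.add_im, Complex.mul_re, Complex.mul_im, Complex.ofReal_re,
      Complex.ofReal_im, Complex.I_re, Complex.I_im]
    ring
end
end

section
/- There is no choice of probabilities q_1, q_2, q_12 ∈ [0,1] such that the distribution p(00) = q_1 q_2 q_12 + (1-q_1)(1-q_2)(1-q_12), p(10) = q_1(1-q_2)(1-q_12) + (1-q_1)q_2 q_12, p(01) = (1-q_1)q_2(1-q_12) + q_1(1-q_2)q_12, p(11) = (1-q_1)(1-q_2)q_12 + q_1 q_2(1-q_12) equals (1/3, 1/3, 1/3, 0) for (p(00), p(01), p(10), p(11)). Consequently, 2-qubit parameterised IQP circuits are not universal for distributions over 2 bits. -/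
/-- no choice of flip probabilities q₁, q₂, q₁₂ ∈ [0,1] makes the
two-bit stochastic bitflip distribution equal to (1/3, 1/3, 1/3, 0) for
(p(00), p(01), p(10), p(11)); hence 2-qubit parameterised IQP circuits are not
universal for distributions over 2 bits. -/
theorem bitflip_not_universal :
    ¬ ∃ q1 q2 q12 : ℝ, q1 ∈ Set.Icc (0 : ℝ) 1 ∧ q2 ∈ Set.Icc (0 : ℝ) 1 ∧
      q12 ∈ Set.Icc (0 : ℝ) 1 ∧
      q1 * q2 * q12 + (1 - q1) * (1 - q2) * (1 - q12) = 1 / 3 ∧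
      (1 - q1) * q2 * (1 - q12) + q1 * (1 - q2) * q12 = 1 / 3 ∧
      q1 * (1 - q2) * (1 - q12) + (1 - q1) * q2 * q12 = 1 / 3 ∧
      (1 - q1) * (1 - q2) * q12 + q1 * q2 * (1 - q12) = 0 := by
  rintro ⟨q1, q2, q12, ⟨h10, h11⟩, ⟨h20, h21⟩, ⟨h30, h31⟩, e1, e2, e3, e4⟩
  have hA : (1 - q1) * (1 - q2) * q12 = 0 := by nlinarith [mul_nonneg (mul_nonneg (by linarith : (0:ℝ) ≤ 1 - q1) (by linarith : (0:ℝ) ≤ 1 - q2)) h30, mul_nonneg (mul_nonneg h10 h20) (by linarith : (0:ℝ) ≤ 1 - q12)]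
  have hB : q1 * q2 * (1 - q12) = 0 := by linarith
  rcases mul_eq_zero.1 hA with hA' | hA'
  · rcases mul_eq_zero.1 hA' with h | h
    · -- q1 = 1
      have hq1 : q1 = 1 := by linarith
      subst hq1
      rcases mul_eq_zero.1 hB with h' | h'
      · rcases mul_eq_zero.1 h' with h2 | h2 <;> nlinarith
      · nlinarith
    · have hq2 : q2 = 1 := by linarith
      subst hq2
      rcases mul_eq_zero.1 hB with h' | h'
      · rcases mul_eq_zero.1 h' with h2 | h2 <;> nlinarith
      · nlinarith
  · subst hA'
    rcases mul_eq_zero.1 hB with h' | h'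
    · rcases mul_eq_zero.1 h' with h2 | h2 <;> nlinarith
    · nlinarith
end

section
/- Subject to the constraint ⟨Z_i⟩ = cos(2φ) cos³(2θ) = 0 with cos(2θ) ≠ 0, the three-body correlator ⟨Z_{i-1}Z_iZ_{i+1}⟩ = cos³(2φ)cos³(2θ) + cos²(2θ)sin(2θ)sin³(2φ) achieves the maximal value 2/(3√3) > 0 (at φ = π/4), whereas any stochastic bitflip circuit of the same structure satisfying ⟨Z_i⟩ = 0 necessarily has ⟨Z_{i-1}Z_iZ_{i+1}⟩ = 0. -/
lemma sqrt3_pos : (0:ℝ) < Real.sqrt 3 := Real.sqrt_pos.mpr (by norm_num)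

lemma bound_aux (s t : ℝ) (hs : s^2 ≤ 1) (ht : t^2 ≤ 1) :
    (1 - s^2) * s * t^3 ≤ 2 / (3 * Real.sqrt 3) := by
  have hr := sqrt3_pos
  have hr2 : Real.sqrt 3 ^ 2 = 3 := Real.sq_sqrt (by norm_num)
  rw [le_div_iff₀ (by positivity)]
  set u := s * t with hu
  have hst2 : u^2 ≤ 1 := by nlinarith [sq_nonneg (s*t), sq_nonneg s, sq_nonneg t, sq_nonneg (s*t-1), sq_nonneg (s*t+1), sq_nonneg (s-t), sq_nonneg (s+t)]
  have hstl : -1 ≤ u := by nlinarith [sq_nonneg (u+1)]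
  have hrle : Real.sqrt 3 ≤ 2 := by nlinarith
  have key : 0 ≤ (Real.sqrt 3*u-1)^2*(Real.sqrt 3*u+2) :=
    mul_nonneg (sq_nonneg _) (by nlinarith)
  have hnn : 0 ≤ t^2*(1-s^2) := mul_nonneg (sq_nonneg _) (by nlinarith)
  have hle : t^2*(1-s^2) ≤ 1-u^2 := by nlinarith [sq_nonneg s]
  have hexpr : (1 - s^2) * s * t^3 = u * (t^2*(1-s^2)) := by rw [hu]; ring
  rw [hexpr]
  have hexp : (Real.sqrt 3*u-1)^2*(Real.sqrt 3*u+2)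
      = 3*Real.sqrt 3*u^3 - 3*Real.sqrt 3*u + 2 := by
    have h33 : Real.sqrt 3 ^ 3 = 3 * Real.sqrt 3 := by
      rw [pow_succ, hr2]
    ring_nf
    rw [h33]
    ring
  have key2 : 3*Real.sqrt 3*u - 3*Real.sqrt 3*u^3 ≤ 2 := by rw [hexp] at key; linarith
  rcases le_or_gt 0 u with hu0 | hu0
  · nlinarith [key2, mul_le_mul_of_nonneg_left hle (mul_nonneg (mul_nonneg (by norm_num : (0:ℝ) ≤ 3) hr.le) hu0)]
  · nlinarith [mul_nonneg hnn hr.le, mul_nonpos_of_nonpos_of_nonneg hu0.le hnn]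

/-- under the constraint ⟨Z_i⟩ = cos(2φ)cos³(2θ) = 0, the quantum
three-body correlator Q(φ,θ) = cos³(2φ)cos³(2θ) + cos²(2θ)sin(2θ)sin³(2φ) achieves
the maximal value 2/(3√3) > 0 (at φ = π/4, with cos(2θ) ≠ 0), whereas the
stochastic bitflip correlator cos³(2φ)cos³(2θ) necessarily vanishes. -/
theorem coherence_advantage_toy_example :
    let Q : ℝ → ℝ → ℝ := fun φ θ =>
      Real.cos (2 * φ) ^ 3 * Real.cos (2 * θ) ^ 3
        + Real.cos (2 * θ) ^ 2 * Real.sin (2 * θ) * Real.sin (2 * φ) ^ 3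
    (0 : ℝ) < 2 / (3 * Real.sqrt 3) ∧
    (∀ φ θ : ℝ, Real.cos (2 * φ) * Real.cos (2 * θ) ^ 3 = 0 →
      Q φ θ ≤ 2 / (3 * Real.sqrt 3)) ∧
    (∃ θ : ℝ, Real.cos (2 * (Real.pi / 4)) * Real.cos (2 * θ) ^ 3 = 0 ∧
      Real.cos (2 * θ) ≠ 0 ∧ Q (Real.pi / 4) θ = 2 / (3 * Real.sqrt 3)) ∧
    (∀ φ θ : ℝ, Real.cos (2 * φ) * Real.cos (2 * θ) ^ 3 = 0 →
      Real.cos (2 * φ) ^ 3 * Real.cos (2 * θ) ^ 3 = 0) := by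
  intro Q
  have hr := sqrt3_pos
  have hr2 : Real.sqrt 3 ^ 2 = 3 := Real.sq_sqrt (by norm_num)
  refine ⟨by positivity, ?_, ?_, ?_⟩
  · intro φ θ hc
    rcases mul_eq_zero.mp hc with h | h
    · -- cos 2φ = 0
      have hs2 : Real.sin (2*θ)^2 ≤ 1 := Real.sin_sq_le_one _
      have ht2 : Real.sin (2*φ)^2 ≤ 1 := Real.sin_sq_le_one _
      have hpyth : Real.cos (2*θ)^2 = 1 - Real.sin (2*θ)^2 := Real.cos_sq' _
      have := bound_aux (Real.sin (2*θ)) (Real.sin (2*φ)) hs2 ht2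
      simp only [Q, h]
      rw [hpyth]
      nlinarith [this]
    · have h0 : Real.cos (2*θ) = 0 := by
        have := pow_eq_zero_iff (n := 3) (by norm_num) |>.mp h
        exact this
      simp [Q, h0]
      positivity
  · refine ⟨Real.arcsin (1/Real.sqrt 3) / 2, ?_, ?_, ?_⟩
    · have : Real.cos (2 * (Real.pi/4)) = 0 := by
        rw [show 2 * (Real.pi/4) = Real.pi/2 by ring, Real.cos_pi_div_two]
      simp [this]
    · have h1 : (1:ℝ)/Real.sqrt 3 ≤ 1 := by
        rw [div_le_one hr]
        nlinarith
      have : Real.cos (2 * (Real.arcsin (1/Real.sqrt 3) / 2)) = Real.sqrt (1 - (1/Real.sqrt 3)^2) := by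
        rw [show 2 * (Real.arcsin (1/Real.sqrt 3) / 2) = Real.arcsin (1/Real.sqrt 3) by ring,
          Real.cos_arcsin]
      rw [this]
      have : (1:ℝ) - (1/Real.sqrt 3)^2 = 2/3 := by
        rw [div_pow, one_pow, hr2]; norm_num
      rw [this]
      positivity
    · have hsin : Real.sin (2 * (Real.arcsin (1/Real.sqrt 3) / 2)) = 1/Real.sqrt 3 := by
        rw [show 2 * (Real.arcsin (1/Real.sqrt 3) / 2) = Real.arcsin (1/Real.sqrt 3) by ring]
        apply Real.sin_arcsin
        · rw [le_div_iff₀ hr]; nlinarith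
        · rw [div_le_one hr]; nlinarith
      have hcos2 : Real.cos (2 * (Real.arcsin (1/Real.sqrt 3) / 2))^2 = 2/3 := by
        have := Real.sin_sq_add_cos_sq (2 * (Real.arcsin (1/Real.sqrt 3) / 2))
        rw [hsin] at this
        have h13 : ((1:ℝ)/Real.sqrt 3)^2 = 1/3 := by
          rw [div_pow, one_pow, hr2]
        linarith [h13 ▸ this]
      have hcphi : Real.cos (2 * (Real.pi/4)) = 0 := by
        rw [show 2 * (Real.pi/4) = Real.pi/2 by ring, Real.cos_pi_div_two]
      have hsphi : Real.sin (2 * (Real.pi/4)) = 1 := by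
        rw [show 2 * (Real.pi/4) = Real.pi/2 by ring, Real.sin_pi_div_two]
      simp only [Q, hcphi, hsphi, hsin, hcos2]
      rw [zero_pow (by norm_num), zero_mul, zero_add, one_pow, mul_one]
      rw [div_mul_div_comm, mul_one]
  · intro φ θ hc
    rcases mul_eq_zero.mp hc with h | h
    · rw [h]; ring
    · rw [h]; ring
end

section
/- For any probability distribution q over {0,1}^n, any witness point t ∈ {0,1}^n, and the Gaussian kernel with bandwidth σ, E_{y∼q}[k(y,t)] = E_{a∼P_σ}[(-1)^{a·t} ⟨Z_a⟩_q], where P_σ(a) = (1-p_σ)^{n-|a|} p_σ^{|a|}, p_σ = (1-e^{-1/(2σ²)})/2, and ⟨Z_a⟩_q = E_{y∼q}[(-1)^{a·y}]. -/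
open Finset Matrix

noncomputable section

/-!
With `c = exp (-1/(2σ²)) = 1 - 2pσ` the kernel is `k(y,t) = c ^ d(y,t)`. Both `c ^ d(y,t)` and
`∑ₐ P_σ(a) (-1)^{a·t + a·y}` factor over the `n` coordinates (a sum over `a` of a product over
`i` is a product of sums over one bit), and one bit contributes `1` if `yᵢ = tᵢ` and `1 - 2pσ`
otherwise. Averaging over `y ∼ q` and exchanging the two sums gives the identity.
-/

section FourierExpansion

variable {n : ℕ}

theorem pow_bdot_eq_prod {M : Type*} [CommMonoid M] (x : M) (a z : Bits n) :
    x ^ bdot a z = ∏ i, if a i ∧ z i then x else 1 := by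
  rw [Finset.prod_ite, Finset.prod_const, Finset.prod_const, one_pow, mul_one, bdot]

theorem pow_sub_wt_mul_pow_wt_eq_prod {M : Type*} [CommMonoid M] (u v : M) (a : Bits n) :
    u ^ (n - wt a) * v ^ wt a = ∏ i, if a i then v else u := by
  have hcompl : (univ.filter fun i => ¬ a i).card = n - wt a := by
    rw [Finset.filter_not, Finset.card_sdiff_of_subset (filter_subset _ _), card_univ,
      Fintype.card_fin, wt]
  rw [Finset.prod_ite, Finset.prod_const, Finset.prod_const, hcompl, wt, mul_comm]

theorem prod_ite_eq_pow_hammingDist_s17 {ι β M : Type*} [Fintype ι] [DecidableEq β] [CommMonoid M]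
    (c : M) (y t : ι → β) :
    ∏ i, (if y i = t i then 1 else c) = c ^ hammingDist y t := by
  rw [Finset.prod_ite, Finset.prod_const, Finset.prod_const, one_pow, one_mul, hammingDist]

theorem sum_bool_bernoulli_mul_signs {R : Type*} [CommRing R] (p : R) (t y : Bool) :
    ∑ b : Bool, (if b then p else 1 - p) * (if b ∧ t then -1 else 1) * (if b ∧ y then -1 else 1)
      = if y = t then 1 else 1 - 2 * p := by
  cases t <;> cases y <;> simp <;> ring

theorem sum_bernoulli_mul_neg_one_pow_bdot {R : Type*} [CommRing R] (p : R) (t y : Bits n) :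
    ∑ a : Bits n, (1 - p) ^ (n - wt a) * p ^ wt a * (-1 : R) ^ bdot a t * (-1 : R) ^ bdot a y
      = (1 - 2 * p) ^ hammingDist y t := by
  calc ∑ a : Bits n, (1 - p) ^ (n - wt a) * p ^ wt a * (-1 : R) ^ bdot a t * (-1 : R) ^ bdot a y
      = ∑ a : Bits n, ∏ i, ((if a i then p else 1 - p) * (if a i ∧ t i then -1 else 1) *
          (if a i ∧ y i then -1 else 1)) := by
        simp only [pow_sub_wt_mul_pow_wt_eq_prod, pow_bdot_eq_prod, Finset.prod_mul_distrib]
    _ = ∏ i, ∑ b : Bool, ((if b then p else 1 - p) * (if b ∧ t i then -1 else 1) *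
          (if b ∧ y i then -1 else 1)) :=
        (Fintype.prod_sum fun i (b : Bool) =>
          (if b then p else 1 - p) * (if b ∧ t i then -1 else 1) * (if b ∧ y i then -1 else 1)).symm
    _ = (1 - 2 * p) ^ hammingDist y t := by
        simp only [sum_bool_bernoulli_mul_signs, prod_ite_eq_pow_hammingDist_s17]

end FourierExpansion

theorem Real.exp_neg_div_eq_pow (d : ℕ) (s : ℝ) :
    Real.exp (-(d : ℝ) / s) = Real.exp (-(1 / s)) ^ d := by
  rw [← Real.exp_nat_mul]
  ring_nf

theorem kernel_witness_expectation_general {n : ℕ} (σ : ℝ) (q : Bits n → ℝ) (t : Bits n) :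
    let pσ : ℝ := (1 - Real.exp (-(1 / (2 * σ ^ 2)))) / 2
    ∑ y : Bits n, q y * Real.exp (-(hammingDist y t : ℝ) / (2 * σ ^ 2))
      = ∑ a : Bits n, (1 - pσ) ^ (n - wt a) * pσ ^ (wt a) * (-1 : ℝ) ^ bdot a t *
          (∑ y : Bits n, q y * (-1 : ℝ) ^ bdot a y) := by
  intro pσ
  have hc : Real.exp (-(1 / (2 * σ ^ 2))) = 1 - 2 * pσ := by
    simp only [pσ]
    ring
  calc ∑ y : Bits n, q y * Real.exp (-(hammingDist y t : ℝ) / (2 * σ ^ 2))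
      = ∑ y : Bits n, q y * ∑ a : Bits n, (1 - pσ) ^ (n - wt a) * pσ ^ wt a *
          (-1 : ℝ) ^ bdot a t * (-1 : ℝ) ^ bdot a y := by
        simp only [Real.exp_neg_div_eq_pow, hc, sum_bernoulli_mul_neg_one_pow_bdot]
    _ = _ := by
        simp only [Finset.mul_sum]
        rw [Finset.sum_comm]
        refine Finset.sum_congr rfl fun a _ => Finset.sum_congr rfl fun y _ => ?_
        ring

/-- for any probability distribution q on {0,1}ⁿ and witness point t,
E_{y∼q}[k(y,t)] = E_{a∼P_σ}[(-1)^{a·t} ⟨Z_a⟩_q] for the Gaussian kernel with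
bandwidth σ. -/
theorem kernel_witness_expectation {n : ℕ} (σ : ℝ) (hσ : 0 < σ) (q : Bits n → ℝ)
    (hq0 : ∀ y, 0 ≤ q y) (hq1 : ∑ y, q y = 1) (t : Bits n) :
    let pσ : ℝ := (1 - Real.exp (-(1 / (2 * σ ^ 2)))) / 2
    ∑ y : Bits n, q y * Real.exp (-(hammingDist y t : ℝ) / (2 * σ ^ 2))
      = ∑ a : Bits n, (1 - pσ) ^ (n - wt a) * pσ ^ (wt a) * (-1 : ℝ) ^ bdot a t *
          (∑ y : Bits n, q y * (-1 : ℝ) ^ bdot a y) :=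
  kernel_witness_expectation_general σ q t
end
end
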